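/- Let p ≥ 3 be a prime, u ∈ {1,…,p−1} and s ∈ ℕ₊. Then for every n ∈ ℕ, A_{p,(p−1)(u·p^s−1)}(n) ≡ ∑_{i=0}^{min(n, u·p^s)} (−1)^i · C(u·p^s, i) · D_p(n − i) (mod p^{s+1}). -/

import Mathlib

open PowerSeries Finset

/-- The number of digits equal to `i` in the base-`p` representation of `n`. -/
def Np (p i n : ℕ) : ℕ := (Nat.digits p n).count i

/-- `Dcoef p r n` is the coefficient of `x^n` in `∏_{i=0}^∞ (1 - x^{p^i})^r`.
Since `p ≥ 2`, the factors with index `i > n` do not affect the coefficient of `x^n`,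
so the product may be truncated at `i = n`. -/
noncomputable def Dcoef (p r n : ℕ) : ℤ :=
  PowerSeries.coeff (R := ℤ) n (∏ i ∈ Finset.range (n + 1), (1 - PowerSeries.X ^ p ^ i) ^ r)

/-- `Dp p n = D_{p,p-1}(n)`. -/
noncomputable def Dp (p n : ℕ) : ℤ := Dcoef p (p - 1) n

/-- `Acoef m k n` is the coefficient of `x^n` in `∏_{i=0}^∞ (1 - x^{m^i})^{-k}`,
the number of `k`-colored `m`-ary partitions of `n`.  Here `(1 - X^{m^i})⁻¹` is
realized as `PowerSeries.invOfUnit (1 - X ^ m ^ i) 1`, and since `m ≥ 2` the factors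
with index `i > n` do not affect the coefficient of `x^n`. -/
noncomputable def Acoef (m k n : ℕ) : ℤ :=
  PowerSeries.coeff (R := ℤ) n
    (∏ i ∈ Finset.range (n + 1),
      (PowerSeries.invOfUnit (1 - PowerSeries.X ^ m ^ i) 1) ^ k)


/-! Let `E = ∏_{i ≤ n} (1 - X^{p^i})`, a unit of `ℤ⟦X⟧`. By Frobenius,
`E^p ≡ ∏_{i ≤ n} (1 - X^{p^{i+1}}) (mod p)`, and `(1 - X)` times the latter telescopes to
`E · (1 - X^{p^{n+1}})`. Hence, modulo `X^{p^{n+1}}`, the series `W = (1 - X) E^{p-1}` satisfies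
`W ≡ 1 (mod p)`, so `W^{u p^s} ≡ 1 (mod p^{s+1})`. With `K = (p-1)(u p^s - 1)` we have
`E^{-K} W^{u p^s} = (1 - X)^{u p^s} E^{p-1}`, so `E^{-K} ≡ (1 - X)^{u p^s} E^{p-1}` modulo
`p^{s+1}` and `X^{p^{n+1}}`. The coefficients of `X^n` of the two sides are `A_{p,K}(n)` and the
sum of the statement. -/

section CommRing

variable {R : Type*} [CommRing R]

theorem natCast_dvd_one_sub_pow_sub_one_sub_pow {p : ℕ} (hp : p.Prime) (y : R) :
    (p : R) ∣ (1 - y) ^ p - (1 - y ^ p) := by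
  -- expand `1 = ((1 - y) + y) ^ p`
  obtain ⟨r, hr⟩ := exists_add_pow_prime_eq hp (1 - y) y
  rw [sub_add_cancel, one_pow] at hr
  exact ⟨-((1 - y) * y * r), by linear_combination -hr⟩

theorem dvd_prod_sub_prod {ι : Type*} {s : Finset ι} {a : R} {f g : ι → R}
    (h : ∀ i ∈ s, a ∣ f i - g i) : a ∣ ∏ i ∈ s, f i - ∏ i ∈ s, g i := by
  simp_rw [← Ideal.mem_span_singleton, ← SModEq.sub_mem] at h ⊢
  exact SModEq.prod h

theorem natCast_dvd_one_sub_mul_prod_pow_sub {p : ℕ} (hp : p.Prime) (x : R) (T : ℕ) :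
    (p : R) ∣ (1 - x) * (∏ i ∈ range T, (1 - x ^ p ^ i)) ^ p
      - (∏ i ∈ range T, (1 - x ^ p ^ i)) * (1 - x ^ p ^ T) := by
  have hfrob : (p : R) ∣ (∏ i ∈ range T, (1 - x ^ p ^ i)) ^ p
      - ∏ i ∈ range T, (1 - x ^ p ^ (i + 1)) := by
    rw [← prod_pow]
    refine dvd_prod_sub_prod fun i _ => ?_
    simpa [pow_succ, pow_mul] using natCast_dvd_one_sub_pow_sub_one_sub_pow hp (x ^ p ^ i)
  have htele : (1 - x) * ∏ i ∈ range T, (1 - x ^ p ^ (i + 1))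
      = (∏ i ∈ range T, (1 - x ^ p ^ i)) * (1 - x ^ p ^ T) := by
    rw [← prod_range_succ, prod_range_succ', pow_zero, pow_one, mul_comm]
  rw [← htele, ← mul_sub]
  exact hfrob.mul_left _

theorem natCast_dvd_one_sub_mul_prod_pow_pred_sub_one {p : ℕ} (hp : p.Prime) {x : R} {T : ℕ}
    (hx : x ^ p ^ T = 0) :
    (p : R) ∣ (1 - x) * (∏ i ∈ range T, (1 - x ^ p ^ i)) ^ (p - 1) - 1 := by
  set e := ∏ i ∈ range T, (1 - x ^ p ^ i)
  have he : IsUnit e := IsUnit.prod_iff.mpr fun i _ => IsNilpotent.isUnit_one_sub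
    ⟨p ^ T, by rw [← pow_mul, mul_comm, pow_mul, hx, zero_pow (pow_ne_zero _ hp.ne_zero)]⟩
  have h : (p : R) ∣ (1 - x) * e ^ p - e * (1 - x ^ p ^ T) :=
    natCast_dvd_one_sub_mul_prod_pow_sub hp x T
  have hpow : e ^ p = e ^ (p - 1) * e := by rw [← pow_succ, Nat.sub_add_cancel hp.one_le]
  rw [hx, sub_zero, mul_one, hpow,
    show (1 - x) * (e ^ (p - 1) * e) - e = ((1 - x) * e ^ (p - 1) - 1) * e by ring] at h
  exact he.dvd_mul_right.mp h

theorem natCast_pow_dvd_one_sub_mul_prod_pow_pred_pow_sub_one {p : ℕ} (hp : p.Prime) {x : R}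
    {T : ℕ} (hx : x ^ p ^ T = 0) (s u : ℕ) :
    (p : R) ^ (s + 1) ∣
      ((1 - x) * (∏ i ∈ range T, (1 - x ^ p ^ i)) ^ (p - 1)) ^ (u * p ^ s) - 1 := by
  have h := dvd_sub_pow_of_dvd_sub (natCast_dvd_one_sub_mul_prod_pow_pred_sub_one hp hx) s
  rw [one_pow] at h
  rw [mul_comm u, pow_mul]
  simpa using h.trans (sub_dvd_pow_sub_pow _ 1 u)

theorem pow_mul_pred_sub_pow_mul_pow_eq {a e e' : R} (he : e * e' = 1) (k : ℕ) {N : ℕ}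
    (hN : 1 ≤ N) :
    e' ^ (k * (N - 1)) - a ^ N * e ^ k = e' ^ (k * (N - 1)) * (1 - (a * e ^ k) ^ N) := by
  have hk : k * N = k * (N - 1) + k := by
    conv_lhs => rw [← Nat.sub_add_cancel hN, mul_add, mul_one]
  calc e' ^ (k * (N - 1)) - a ^ N * e ^ k
      = e' ^ (k * (N - 1)) - (e * e') ^ (k * (N - 1)) * a ^ N * e ^ k := by
        rw [he, one_pow, one_mul]
    _ = e' ^ (k * (N - 1)) * (1 - (a * e ^ k) ^ N) := by
        rw [mul_pow a, ← pow_mul, hk, pow_add]; ring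

end CommRing

namespace PowerSeries

variable {R : Type*} [CommRing R]

theorem coeff_eq_of_X_pow_dvd_sub {m n : ℕ} {f g : R⟦X⟧} (h : X ^ m ∣ f - g) (hn : n < m) :
    coeff n f = coeff n g :=
  sub_eq_zero.mp (by rw [← map_sub]; exact X_pow_dvd_iff.mp h n hn)

theorem coeff_prod_range_eq_of_le {f : ℕ → R⟦X⟧} {m a b : ℕ} (hab : a ≤ b)
    (hf : ∀ i, a ≤ i → X ^ (m + 1) ∣ f i - 1) :
    coeff m (∏ i ∈ range b, f i) = coeff m (∏ i ∈ range a, f i) := by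
  refine coeff_eq_of_X_pow_dvd_sub ?_ (lt_add_one m)
  rw [← prod_range_mul_prod_Ico f hab, ← mul_sub_one]
  refine Dvd.dvd.mul_left ?_ _
  simpa using dvd_prod_sub_prod (g := 1) fun i hi => hf i (mem_Ico.mp hi).1

theorem dvd_coeff_of_mk_C_dvd_mk {c : R} {f : R⟦X⟧} {m n : ℕ}
    (h : Ideal.Quotient.mk (Ideal.span {X ^ m}) (C c) ∣ Ideal.Quotient.mk _ f) (hn : n < m) :
    c ∣ coeff n f := by
  obtain ⟨g, hg⟩ := h
  obtain ⟨g, rfl⟩ := Ideal.Quotient.mk_surjective g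
  rw [← map_mul, Ideal.Quotient.eq, Ideal.mem_span_singleton] at hg
  rw [coeff_eq_of_X_pow_dvd_sub hg hn, coeff_C_mul]
  exact dvd_mul_right _ _

theorem coeff_one_sub_X_pow (N i : ℕ) :
    coeff i ((1 - X : R⟦X⟧) ^ N) = (-1) ^ i * N.choose i := by
  have h : (1 - X : R⟦X⟧) ^ N =
      rescale (-1) (((1 + Polynomial.X) ^ N : Polynomial R) : R⟦X⟧) := by
    simp [rescale_X, sub_eq_add_neg]
  rw [h, coeff_rescale, Polynomial.coeff_coe, Polynomial.coeff_one_add_X_pow]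

theorem coeff_one_sub_X_pow_mul (N n : ℕ) (f : R⟦X⟧) :
    coeff n ((1 - X) ^ N * f)
      = ∑ i ∈ range (min n N + 1), (-1) ^ i * N.choose i * coeff (n - i) f := by
  rw [coeff_mul, Nat.sum_antidiagonal_eq_sum_range_succ_mk]
  simp only [coeff_one_sub_X_pow]
  refine (sum_subset (range_subset_range.mpr (by omega)) fun i hi hi' => ?_).symm
  rw [Nat.choose_eq_zero_of_lt (by simp only [mem_range] at hi hi'; omega)]
  simp

theorem prod_mul_prod_invOfUnit {ι : Type*} (s : Finset ι) (f : ι → R⟦X⟧)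
    (hf : ∀ i ∈ s, constantCoeff (f i) = 1) :
    (∏ i ∈ s, f i) * ∏ i ∈ s, invOfUnit (f i) 1 = 1 := by
  rw [← prod_mul_distrib]
  exact prod_eq_one fun i hi => mul_invOfUnit _ _ (by simp [hf i hi])

end PowerSeries

theorem Dcoef_eq_coeff_prod_pow {p : ℕ} (hp : 1 < p) (r : ℕ) {m T : ℕ} (hmT : m < T) :
    Dcoef p r m = coeff m ((∏ i ∈ range T, (1 - X ^ p ^ i : ℤ⟦X⟧)) ^ r) := by
  rw [Dcoef, ← prod_pow, coeff_prod_range_eq_of_le hmT]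
  intro i hi
  have h := sub_dvd_pow_sub_pow (1 - X ^ p ^ i : ℤ⟦X⟧) 1 r
  rw [one_pow, sub_sub_cancel_left, neg_dvd] at h
  exact (pow_dvd_pow X (hi.trans (Nat.lt_pow_self hp).le)).trans h

theorem stmt14_general (p u s : ℕ) (hp : p.Prime) (hu1 : 1 ≤ u) (n : ℕ) :
    (p : ℤ) ^ (s + 1) ∣
      Acoef p ((p - 1) * (u * p ^ s - 1)) n -
        ∑ i ∈ Finset.range (min n (u * p ^ s) + 1),
          (-1 : ℤ) ^ i * ((u * p ^ s).choose i : ℤ) * Dp p (n - i) := by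
  set N := u * p ^ s
  set K := (p - 1) * (N - 1)
  set E : ℤ⟦X⟧ := ∏ i ∈ range (n + 1), (1 - X ^ p ^ i)
  set Ei : ℤ⟦X⟧ := ∏ i ∈ range (n + 1), invOfUnit (1 - X ^ p ^ i) 1
  have hEEi : E * Ei = 1 := prod_mul_prod_invOfUnit _ _ fun i _ => by simp [hp.ne_zero]
  have hA : Acoef p K n = coeff n (Ei ^ K) := by rw [Acoef, prod_pow]
  have hD : ∑ i ∈ range (min n N + 1), (-1 : ℤ) ^ i * (N.choose i : ℤ) * Dp p (n - i)
      = coeff n ((1 - X) ^ N * E ^ (p - 1)) := by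
    rw [coeff_one_sub_X_pow_mul]
    refine sum_congr rfl fun i _ => ?_
    rw [Dp, Dcoef_eq_coeff_prod_pow hp.one_lt _ (by omega : n - i < n + 1)]
  set π := Ideal.Quotient.mk (Ideal.span {(X : ℤ⟦X⟧) ^ p ^ (n + 1)})
  have hX : π X ^ p ^ (n + 1) = 0 := by rw [← map_pow]; exact Ideal.Quotient.mk_singleton_self _
  have hW := natCast_pow_dvd_one_sub_mul_prod_pow_pred_pow_sub_one hp hX s u
  have hmod : π (C ((p : ℤ) ^ (s + 1))) ∣ π (Ei ^ K - (1 - X) ^ N * E ^ (p - 1)) := by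
    rw [pow_mul_pred_sub_pow_mul_pow_eq hEEi (p - 1) (Nat.mul_pos hu1 (pow_pos hp.pos s)),
      map_mul]
    refine Dvd.dvd.mul_left ?_ _
    simpa [E, dvd_sub_comm] using hW
  rw [hA, hD, ← map_sub]
  exact dvd_coeff_of_mk_C_dvd_mk hmod ((Nat.lt_succ_self n).trans (Nat.lt_pow_self hp.one_lt))

theorem stmt14 (p u s : ℕ) (hp : p.Prime) (hp3 : 3 ≤ p) (hu1 : 1 ≤ u) (hu2 : u ≤ p - 1)
    (hs : 1 ≤ s) (n : ℕ) :
    (p : ℤ) ^ (s + 1) ∣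
      Acoef p ((p - 1) * (u * p ^ s - 1)) n -
        ∑ i ∈ Finset.range (min n (u * p ^ s) + 1),
          (-1 : ℤ) ^ i * ((u * p ^ s).choose i : ℤ) * Dp p (n - i) :=
  stmt14_general p u s hp hu1 n
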